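/- If n is odd, the isometry group of F_2^n with the standard dot product is isomorphic as a group to the symplectic group Sp(n-1) over F_2. -/

import Mathlib

attribute [local instance] starRingOfComm
namespace Stmt9
open Matrix Finset
variable (m : ℕ)
abbrev ι (m : ℕ) := (Fin m ⊕ Fin m) ⊕ Unit
noncomputable def e : ι m ≃ Fin (2 * m + 1) :=
  ((finSumFinEquiv.sumCongr (Equiv.ofUnique Unit (Fin 1))).trans
    finSumFinEquiv).trans (finCongr (by omega))
def col : ι m → ℕ → ZMod 2
  | .inl (.inl j), i => if i = 2*(j:ℕ) ∨ i = 2*(j:ℕ)+1 then 1 else 0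
  | .inl (.inr j), i => if 2*(j:ℕ)+1 ≤ i then 1 else 0
  | .inr _, _ => 1
noncomputable def P : Matrix (ι m) (ι m) (ZMod 2) := fun i c => col m c (e m i)
noncomputable def G : Matrix (ι m) (ι m) (ZMod 2) :=
  fromBlocks (J (Fin m) (ZMod 2)) 0 0 (1 : Matrix Unit Unit (ZMod 2))
lemma sum_pair {N a b : ℕ} (hab : a ≠ b) (ha : a < N) (hb : b < N) (f : ℕ → ZMod 2) :
    ∑ x ∈ range N, (if x = a ∨ x = b then 1 else 0) * f x = f a + f b := by
  have : ∀ x ∈ range N, (if x = a ∨ x = b then (1:ZMod 2) else 0) * f x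
      = (if x = a then f x else 0) + (if x = b then f x else 0) := by
    intro x _
    rcases eq_or_ne x a with rfl | hxa
    · simp [hab]
    rcases eq_or_ne x b with rfl | hxb
    · simp [hxa]
    · simp [hxa, hxb]
  rw [Finset.sum_congr rfl this, Finset.sum_add_distrib,
    Finset.sum_ite_eq' (range N) a f, Finset.sum_ite_eq' (range N) b f]
  simp [Finset.mem_range.mpr ha, Finset.mem_range.mpr hb]
lemma sum_tail (N a : ℕ) :
    ∑ x ∈ range N, (if a ≤ x then (1:ZMod 2) else 0) = ((N - a : ℕ) : ZMod 2) := by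
  rw [Finset.sum_boole]
  have : (range N).filter (fun x => a ≤ x) = Finset.Ico a N := by
    ext x; simp [Finset.mem_Ico, and_comm]
  rw [this, Nat.card_Ico]

lemma gram : (P m)ᵀ * P m = G m := by
  ext c d
  have key : ((P m)ᵀ * P m) c d = ∑ x ∈ range (2*m+1), col m c x * col m d x := by
    rw [Matrix.mul_apply]
    calc ∑ i, (P m)ᵀ c i * P m i d
        = ∑ i, (fun t : Fin (2*m+1) => col m c (t:ℕ) * col m d (t:ℕ)) (e m i) := rfl
      _ = ∑ t : Fin (2*m+1), col m c (t:ℕ) * col m d (t:ℕ) :=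
          Equiv.sum_comp (e m) (fun t : Fin (2*m+1) => col m c (t:ℕ) * col m d (t:ℕ))
      _ = ∑ x ∈ range (2*m+1), col m c x * col m d x := Fin.sum_univ_eq_sum_range (fun x => col m c x * col m d x) (2*m+1)
  rw [key]
  have evencast : ∀ t : ℕ, ((2*t : ℕ) : ZMod 2) = 0 := by
    intro t
    push_cast
    rw [show (2:ZMod 2) = 0 from by decide, zero_mul]
  rcases c with (j|j)|u <;> rcases d with (k|k)|v
  · -- u u
    have hj : (j:ℕ) < m := j.isLt
    have hk : (k:ℕ) < m := k.isLt
    simp only [col]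
    rw [sum_pair (by omega) (by omega) (by omega)]
    rcases eq_or_ne j k with rfl | h
    · simp [G, Matrix.J]
      decide
    · have h' : (j:ℕ) ≠ (k:ℕ) := fun hh => h (Fin.ext hh)
      rw [if_neg (by omega), if_neg (by omega)]
      simp [G, Matrix.J]
  · -- u v
    have hj : (j:ℕ) < m := j.isLt
    have hk : (k:ℕ) < m := k.isLt
    simp only [col]
    rw [sum_pair (by omega) (by omega) (by omega)]
    rcases eq_or_ne j k with rfl | h
    · rw [if_neg (by omega), if_pos (by omega)]
      simp [G, Matrix.J, Matrix.one_apply]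
    · have h' : (j:ℕ) ≠ (k:ℕ) := fun hh => h (Fin.ext hh)
      by_cases hlt : (k:ℕ) < (j:ℕ)
      · rw [if_pos (by omega), if_pos (by omega)]
        simp [G, Matrix.J, Matrix.one_apply, h]
        decide
      · rw [if_neg (by omega), if_neg (by omega)]
        simp [G, Matrix.J, Matrix.one_apply, h]
  · -- u Ω
    have hj : (j:ℕ) < m := j.isLt
    simp only [col]
    rw [sum_pair (by omega) (by omega) (by omega)]
    simp [G]
    decide
  · -- v u
    have hj : (j:ℕ) < m := j.isLt
    have hk : (k:ℕ) < m := k.isLt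
    rw [Finset.sum_congr rfl (fun x _ => mul_comm (col m (.inl (.inr j)) x) (col m (.inl (.inl k)) x))]
    simp only [col]
    rw [sum_pair (by omega) (by omega) (by omega)]
    rcases eq_or_ne j k with rfl | h
    · rw [if_neg (by omega), if_pos (by omega)]
      simp [G, Matrix.J, Matrix.one_apply]
    · have h' : (j:ℕ) ≠ (k:ℕ) := fun hh => h (Fin.ext hh)
      by_cases hlt : (j:ℕ) < (k:ℕ)
      · rw [if_pos (by omega), if_pos (by omega)]
        simp [G, Matrix.J, Matrix.one_apply, h]
        decide
      · rw [if_neg (by omega), if_neg (by omega)]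
        simp [G, Matrix.J, Matrix.one_apply, h]
  · -- v v
    have hj : (j:ℕ) < m := j.isLt
    have hk : (k:ℕ) < m := k.isLt
    simp only [col]
    have merge : ∀ x ∈ range (2*m+1),
        (if 2*(j:ℕ)+1 ≤ x then (1:ZMod 2) else 0) * (if 2*(k:ℕ)+1 ≤ x then 1 else 0)
        = if max (2*(j:ℕ)+1) (2*(k:ℕ)+1) ≤ x then 1 else 0 := by
      intro x _
      by_cases h1 : 2*(j:ℕ)+1 ≤ x <;> by_cases h2 : 2*(k:ℕ)+1 ≤ x <;>
        simp [h1, h2, max_le_iff] <;> omega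
    rw [Finset.sum_congr rfl merge, sum_tail]
    obtain ⟨t, ht⟩ : ∃ t, 2*m+1 - max (2*(j:ℕ)+1) (2*(k:ℕ)+1) = 2*t :=
      ⟨m - max (j:ℕ) (k:ℕ), by omega⟩
    rw [ht, evencast]
    simp [G, Matrix.J]
  · -- v Ω
    have hj : (j:ℕ) < m := j.isLt
    simp only [col, mul_one]
    rw [sum_tail]
    obtain ⟨t, ht⟩ : ∃ t, 2*m+1 - (2*(j:ℕ)+1) = 2*t := ⟨m - (j:ℕ), by omega⟩
    rw [ht, evencast]
    simp [G]
  · -- Ω u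
    have hk : (k:ℕ) < m := k.isLt
    rw [Finset.sum_congr rfl (fun x _ => mul_comm (col m (.inr u) x) (col m (.inl (.inl k)) x))]
    simp only [col]
    rw [sum_pair (by omega) (by omega) (by omega)]
    simp [G]
    decide
  · -- Ω v
    have hk : (k:ℕ) < m := k.isLt
    rw [Finset.sum_congr rfl (fun x _ => mul_comm (col m (.inr u) x) (col m (.inl (.inr k)) x))]
    simp only [col, mul_one]
    rw [sum_tail]
    obtain ⟨t, ht⟩ : ∃ t, 2*m+1 - (2*(k:ℕ)+1) = 2*t := ⟨m - (k:ℕ), by omega⟩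
    rw [ht, evencast]
    simp [G]
  · -- Ω Ω
    simp only [col, mul_one]
    rw [Finset.sum_const, Finset.card_range, nsmul_eq_mul, mul_one]
    have h1 : ((2*m+1 : ℕ) : ZMod 2) = 1 := by
      push_cast
      rw [show (2:ZMod 2) = 0 from by decide]
      ring
    rw [h1]
    simp [G, Matrix.one_apply]
lemma negone : (-1 : Matrix (Fin m ⊕ Fin m) (Fin m ⊕ Fin m) (ZMod 2)) = 1 := by
  have h : ∀ x : ZMod 2, -x = x := by decide
  ext i j
  rw [Matrix.neg_apply, h]

lemma GG : G m * G m = 1 := by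
  unfold G
  rw [Matrix.fromBlocks_multiply]
  simp only [Matrix.mul_zero, Matrix.zero_mul, add_zero, zero_add, mul_one,
    Matrix.J_squared, negone, Matrix.mul_one]
  rw [Matrix.fromBlocks_one]

lemma detP : IsUnit (P m).det := by
  have h := congrArg Matrix.det (gram m)
  rw [Matrix.det_mul, Matrix.det_transpose] at h
  have hG : (G m).det ≠ 0 := by
    have := congrArg Matrix.det (GG m)
    rw [Matrix.det_mul, Matrix.det_one] at this
    intro h0
    rw [h0, mul_zero] at this
    exact zero_ne_one this
  rw [isUnit_iff_ne_zero]
  intro h0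
  rw [h0, mul_zero] at h
  exact hG h.symm

lemma QP : (P m)⁻¹ * P m = 1 := Matrix.nonsing_inv_mul _ (detP m)
lemma PQ : P m * (P m)⁻¹ = 1 := Matrix.mul_nonsing_inv _ (detP m)

lemma Qdef : (P m)⁻¹ = G m * (P m)ᵀ :=
  Matrix.inv_eq_left_inv (by rw [Matrix.mul_assoc, gram, GG])

lemma Pcol : ∀ i, P m i (Sum.inr ()) = 1 := fun _ => rfl

lemma Grow : ∀ c, G m (Sum.inr ()) c = if c = Sum.inr () then 1 else 0 := by
  rintro ((z|z)|v) <;> simp [G]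

lemma Qrow : ∀ j, (P m)⁻¹ (Sum.inr ()) j = 1 := by
  intro j
  rw [Qdef, Matrix.mul_apply]
  rw [Finset.sum_eq_single (Sum.inr ())]
  · rw [Grow]
    simp [Pcol]
  · intro b _ hb
    rw [Grow, if_neg hb, zero_mul]
  · intro h
    exact absurd (Finset.mem_univ _) h

lemma star_eq (X : Matrix (ι m) (ι m) (ZMod 2)) : star X = Xᵀ := rfl

lemma EGE (S : Matrix (Fin m ⊕ Fin m) (Fin m ⊕ Fin m) (ZMod 2))
    (hS : S ∈ Matrix.symplecticGroup (Fin m) (ZMod 2)) :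
    (fromBlocks S 0 0 (1 : Matrix Unit Unit (ZMod 2)))ᵀ * G m * fromBlocks S 0 0 1 = G m := by
  unfold G
  rw [Matrix.fromBlocks_transpose, Matrix.fromBlocks_multiply, Matrix.fromBlocks_multiply]
  have hJ : Sᵀ * J (Fin m) (ZMod 2) * S = J (Fin m) (ZMod 2) :=
    (SymplecticGroup.mem_iff').mp hS
  simp only [Matrix.mul_zero, Matrix.zero_mul, add_zero, zero_add, Matrix.mul_one,
    Matrix.one_mul, Matrix.transpose_zero, Matrix.transpose_one]
  rw [Matrix.mul_assoc, ← Matrix.mul_assoc Sᵀ, hJ]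

lemma conj_mem (S : Matrix (Fin m ⊕ Fin m) (Fin m ⊕ Fin m) (ZMod 2))
    (hS : S ∈ Matrix.symplecticGroup (Fin m) (ZMod 2)) :
    P m * fromBlocks S 0 0 1 * (P m)⁻¹ ∈ Matrix.orthogonalGroup (ι m) (ZMod 2) := by
  rw [Matrix.mem_orthogonalGroup_iff']
  set E := fromBlocks S 0 0 (1 : Matrix Unit Unit (ZMod 2)) with hE
  have key : (P m * E * (P m)⁻¹)ᵀ * (P m * E * (P m)⁻¹)
      = ((P m)⁻¹)ᵀ * (Eᵀ * ((P m)ᵀ * P m) * E) * (P m)⁻¹ := by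
    simp only [Matrix.transpose_mul, Matrix.mul_assoc]
  rw [key, gram, EGE m S hS]
  have h1 : ((P m)⁻¹)ᵀ * G m * (P m)⁻¹ = 1 := by
    rw [← gram]
    calc ((P m)⁻¹)ᵀ * ((P m)ᵀ * P m) * (P m)⁻¹
        = (P m * (P m)⁻¹)ᵀ * (P m * (P m)⁻¹) := by
          rw [Matrix.transpose_mul]
          simp only [Matrix.mul_assoc]
      _ = 1 := by rw [PQ]; simp
  exact h1

noncomputable def Ψ : Matrix.symplecticGroup (Fin m) (ZMod 2) →*
    Matrix.orthogonalGroup (ι m) (ZMod 2) where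
  toFun S := ⟨P m * fromBlocks S.1 0 0 1 * (P m)⁻¹, conj_mem m S.1 S.2⟩
  map_one' := by
    refine Subtype.ext ?_
    simp only [OneMemClass.coe_one, Matrix.fromBlocks_one]
    rw [Matrix.mul_one, PQ]
  map_mul' S T := by
    refine Subtype.ext ?_
    simp only [Submonoid.coe_mul, MulMemClass.coe_mul]
    calc P m * fromBlocks (S.1 * T.1) 0 0 1 * (P m)⁻¹
        = P m * (fromBlocks S.1 0 0 1 * fromBlocks T.1 0 0 1) * (P m)⁻¹ := by
          rw [Matrix.fromBlocks_multiply]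
          simp
      _ = P m * fromBlocks S.1 0 0 1 * (P m)⁻¹ * (P m * fromBlocks T.1 0 0 1 * (P m)⁻¹) := by
          simp only [Matrix.mul_assoc]
          rw [Matrix.nonsing_inv_mul_cancel_left _ _ (detP m)]
  
lemma Ψ_inj : Function.Injective (Ψ m) := by
  intro S T h
  have h1 : (Ψ m S).1 = (Ψ m T).1 := congrArg _ h
  simp only [Ψ, MonoidHom.coe_mk, OneHom.coe_mk] at h1
  have h2 : fromBlocks S.1 0 0 (1 : Matrix Unit Unit (ZMod 2)) = fromBlocks T.1 0 0 1 := by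
    have := congrArg (fun X => (P m)⁻¹ * X * P m) h1
    simpa only [Matrix.mul_assoc, Matrix.nonsing_inv_mul_cancel_left _ _ (detP m),
      Matrix.nonsing_inv_mul _ (detP m), Matrix.mul_one,
      Matrix.nonsing_inv_mul_cancel_right _ _ (detP m)] using this
  ext1
  ext a b
  have := congrFun (congrFun h2 (Sum.inl a)) (Sum.inl b)
  simpa using this

lemma Ψ_surj : Function.Surjective (Ψ m) := by
  rintro ⟨A, hA⟩
  have sq : ∀ x : ZMod 2, x * x = x := by decide
  have hA1 : Aᵀ * A = 1 := by
    rw [← star_eq]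
    exact (Matrix.mem_orthogonalGroup_iff' _ _).mp hA
  have hA2 : A * Aᵀ = 1 := by
    rw [← star_eq]
    exact (Matrix.mem_orthogonalGroup_iff _ _).mp hA
  have colsum : ∀ c, ∑ i, A i c = 1 := by
    intro c
    have h := congrFun (congrFun hA1 c) c
    rw [Matrix.mul_apply, Matrix.one_apply_eq] at h
    rw [← h]
    exact Finset.sum_congr rfl fun i _ => by rw [Matrix.transpose_apply, sq]
  have rowsum : ∀ i, ∑ j, A i j = 1 := by
    intro i
    have h := congrFun (congrFun hA2 i) i
    rw [Matrix.mul_apply, Matrix.one_apply_eq] at h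
    rw [← h]
    exact Finset.sum_congr rfl fun j _ => by rw [Matrix.transpose_apply, sq]
  set B := (P m)⁻¹ * A * P m with hBdef
  have Brow : ∀ c, B (Sum.inr ()) c = if c = Sum.inr () then 1 else 0 := by
    intro c
    rw [hBdef, Matrix.mul_apply]
    have h1 : ∀ k, ((P m)⁻¹ * A) (Sum.inr ()) k = 1 := by
      intro k
      rw [Matrix.mul_apply]
      calc ∑ j, (P m)⁻¹ (Sum.inr ()) j * A j k = ∑ j, A j k :=
            Finset.sum_congr rfl fun j _ => by rw [Qrow, one_mul]
        _ = 1 := colsum k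
    calc ∑ k, ((P m)⁻¹ * A) (Sum.inr ()) k * P m k c
        = ∑ k, P m k (Sum.inr ()) * P m k c :=
          Finset.sum_congr rfl fun k _ => by rw [h1, Pcol, one_mul]
      _ = ((P m)ᵀ * P m) (Sum.inr ()) c := by rw [Matrix.mul_apply]; rfl
      _ = if c = Sum.inr () then 1 else 0 := by rw [gram, Grow]
  have Bcol : ∀ c, B c (Sum.inr ()) = if c = Sum.inr () then 1 else 0 := by
    intro c
    rw [hBdef, Matrix.mul_apply]
    calc ∑ k, ((P m)⁻¹ * A) c k * P m k (Sum.inr ())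
        = ∑ k, ∑ j, (P m)⁻¹ c j * A j k :=
          Finset.sum_congr rfl fun k _ => by rw [Pcol, mul_one, Matrix.mul_apply]
      _ = ∑ j, ∑ k, (P m)⁻¹ c j * A j k := Finset.sum_comm
      _ = ∑ j, (P m)⁻¹ c j := by
          refine Finset.sum_congr rfl fun j _ => ?_
          rw [← Finset.mul_sum, rowsum, mul_one]
      _ = ∑ j, (P m)⁻¹ c j * P m j (Sum.inr ()) :=
          Finset.sum_congr rfl fun j _ => by rw [Pcol, mul_one]
      _ = ((P m)⁻¹ * P m) c (Sum.inr ()) := by rw [Matrix.mul_apply]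
      _ = if c = Sum.inr () then 1 else 0 := by rw [QP, Matrix.one_apply]
  have BGB : Bᵀ * G m * B = G m := by
    have hQGQ : ((P m)⁻¹)ᵀ * G m * (P m)⁻¹ = 1 := by
      rw [← gram]
      calc ((P m)⁻¹)ᵀ * ((P m)ᵀ * P m) * (P m)⁻¹
          = (P m * (P m)⁻¹)ᵀ * (P m * (P m)⁻¹) := by
            rw [Matrix.transpose_mul]
            simp only [Matrix.mul_assoc]
        _ = 1 := by rw [PQ]; simp
    calc Bᵀ * G m * B
        = (P m)ᵀ * (Aᵀ * (((P m)⁻¹)ᵀ * G m * (P m)⁻¹) * A) * P m := by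
          rw [hBdef]
          simp only [Matrix.transpose_mul, Matrix.mul_assoc]
      _ = (P m)ᵀ * P m := by rw [hQGQ, Matrix.mul_one, hA1, Matrix.mul_one]
      _ = G m := gram m
  set S : Matrix (Fin m ⊕ Fin m) (Fin m ⊕ Fin m) (ZMod 2) :=
    fun a b => B (Sum.inl a) (Sum.inl b) with hSdef
  have hB : B = fromBlocks S 0 0 1 := by
    ext i j
    rcases i with z|u <;> rcases j with w|v
    · rfl
    · rw [Bcol]
      simp
    · rw [Brow]
      simp
    · rw [Brow]
      simp [Matrix.one_apply]
  have hSp : S ∈ Matrix.symplecticGroup (Fin m) (ZMod 2) := by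
    rw [SymplecticGroup.mem_iff']
    have h2 : (fromBlocks S 0 0 (1 : Matrix Unit Unit (ZMod 2)))ᵀ * G m * fromBlocks S 0 0 1
        = G m := by rw [← hB]; exact BGB
    unfold G at h2
    rw [Matrix.fromBlocks_transpose, Matrix.fromBlocks_multiply, Matrix.fromBlocks_multiply] at h2
    ext a b
    have h3 := congrFun (congrFun h2 (Sum.inl a)) (Sum.inl b)
    simpa [Matrix.mul_assoc] using h3
  refine ⟨⟨S, hSp⟩, ?_⟩
  refine Subtype.ext ?_
  simp only [Ψ, MonoidHom.coe_mk, OneHom.coe_mk]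
  rw [← hB, hBdef]
  simp only [Matrix.mul_assoc, PQ, Matrix.mul_one]
  rw [← Matrix.mul_assoc, PQ, Matrix.one_mul]

lemma star_eq' {n : Type*} [Fintype n] (X : Matrix n n (ZMod 2)) : star X = Xᵀ := rfl

noncomputable def reO : Matrix.orthogonalGroup (Fin (2*m+1)) (ZMod 2) ≃*
    Matrix.orthogonalGroup (ι m) (ZMod 2) where
  toFun A := ⟨(A : Matrix _ _ (ZMod 2)).submatrix (e m) (e m), by
    have hA : A.1 * star A.1 = 1 := (Matrix.mem_orthogonalGroup_iff _ _).mp A.2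
    rw [Matrix.mem_orthogonalGroup_iff, Matrix.transpose_submatrix,
      Matrix.submatrix_mul_equiv, ← star_eq', hA, Matrix.submatrix_one_equiv]⟩
  invFun A := ⟨(A : Matrix _ _ (ZMod 2)).submatrix (e m).symm (e m).symm, by
    have hA : A.1 * star A.1 = 1 := (Matrix.mem_orthogonalGroup_iff _ _).mp A.2
    rw [Matrix.mem_orthogonalGroup_iff, Matrix.transpose_submatrix,
      Matrix.submatrix_mul_equiv, ← star_eq', hA, Matrix.submatrix_one_equiv]⟩
  left_inv A := by
    refine Subtype.ext ?_
    simp [Matrix.submatrix_submatrix]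
  right_inv A := by
    refine Subtype.ext ?_
    simp [Matrix.submatrix_submatrix]
  map_mul' A B := by
    refine Subtype.ext ?_
    simp only [Submonoid.coe_mul, MulMemClass.coe_mul]
    rw [Matrix.submatrix_mul_equiv]

noncomputable def finalEquiv : Matrix.orthogonalGroup (Fin (2*m+1)) (ZMod 2) ≃*
    Matrix.symplecticGroup (Fin m) (ZMod 2) :=
  (reO m).trans (MulEquiv.ofBijective (Ψ m) ⟨Ψ_inj m, Ψ_surj m⟩).symm

end Stmt9

/-- For odd `n`, the isometry group of `F₂ⁿ` with the standard dot product is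
isomorphic to the symplectic group `Sp(n-1)` over `F₂`. -/
theorem stmt9 (m : ℕ) :
    Nonempty (Matrix.orthogonalGroup (Fin (2 * m + 1)) (ZMod 2) ≃*
      Matrix.symplecticGroup (Fin m) (ZMod 2)) := by
  exact ⟨Stmt9.finalEquiv m⟩
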